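/- Let W be a stochastic matrix from a finite set X to pmfs on a finite set Y with C_0(W) ≠ C_1(W). Then the sphere packing exponent E_sp(R,W) is strictly positive for every rate R ∈ (C_0(W), C_1(W)). -/

import Mathlib

open Real MeasureTheory Filter

def IsPMF {Y : Type*} [Fintype Y] (W : Y → ℝ) : Prop :=
  (∀ y, 0 ≤ W y) ∧ ∑ y, W y = 1

noncomputable def renyiDiv {Y : Type*} [Fintype Y] (α : ℝ) (W Q : Y → ℝ) : ℝ :=
  if α = 1 then ∑ y, W y * Real.log (W y / Q y)
  else (α - 1)⁻¹ * Real.log (∑ y, W y ^ α * Q y ^ (1 - α))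

open Classical in
/-- Extended-real-valued order-`α` Rényi divergence, taking the value `⊤` when the
divergence is infinite. -/
noncomputable def renyiDivE {Y : Type*} [Fintype Y] (α : ℝ) (W Q : Y → ℝ) : ENNReal :=
  if α = 1 then
    (if ∀ y, Q y = 0 → W y = 0 then ENNReal.ofReal (renyiDiv 1 W Q) else ⊤)
  else
    (if 0 < ∑ y, W y ^ α * Q y ^ (1 - α) then ENNReal.ofReal (renyiDiv α W Q) else ⊤)

/-- The order-`α` tilted pmf `W^α_Q`. -/
noncomputable def tilt {Y : Type*} [Fintype Y] (α : ℝ) (W Q : Y → ℝ) : Y → ℝ :=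
  fun y => Real.exp ((1 - α) * renyiDiv α W Q) * W y ^ α * Q y ^ (1 - α)

/-- The order-`α` Rényi information `I_α(P;W)` (mutual information for `α = 1`). -/
noncomputable def renyiInfo {X Y : Type*} [Fintype X] [Fintype Y] (α : ℝ) (P : X → ℝ)
    (W : X → Y → ℝ) : ℝ :=
  if α = 1 then ∑ x, P x * ∑ y, W x y * Real.log (W x y / (∑ x', P x' * W x' y))
  else (α / (α - 1)) * Real.log (∑ y, (∑ x, P x * W x y ^ α) ^ α⁻¹)

/-- The order-`α` Rényi capacity `C_α(W) = sup_P I_α(P;W)`. -/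
noncomputable def renyiCap {X Y : Type*} [Fintype X] [Fintype Y] (α : ℝ) (W : X → Y → ℝ) : ℝ :=
  sSup {c | ∃ P : X → ℝ, IsPMF P ∧ c = renyiInfo α P W}

/-- The sphere packing exponent `E_sp(R,W)`. -/
noncomputable def spe {X Y : Type*} [Fintype X] [Fintype Y] (R : ℝ) (W : X → Y → ℝ) : ℝ :=
  sSup {e | ∃ α ∈ Set.Ioo (0:ℝ) 1, e = ((1 - α) / α) * (renyiCap α W - R)}

/-- The order-`α` Rényi mean `q_{α,P}`. -/
noncomputable def renyiMean {X Y : Type*} [Fintype X] [Fintype Y] (α : ℝ) (P : X → ℝ)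
    (W : X → Y → ℝ) : Y → ℝ :=
  fun y => (∑ x, P x * W x y ^ α) ^ α⁻¹ / ∑ y', (∑ x, P x * W x y' ^ α) ^ α⁻¹

/-!
With `F α = log ∑_y (∑_x P x W(y|x)^α)^(1/α)` one has `I_α(P;W) = α F(α) / (α - 1)` for `α ≠ 1`,
`F 1 = 0` and `F'(1) = I_1(P;W)`, so `I_α(P;W) → I_1(P;W)` as `α → 1`. Choosing `P` with
`I_1(P;W) > R` and then `α < 1` close to `1` gives `C_α(W) > R`, a positive term of the supremum
defining `E_sp(R,W)`. That supremum is finite: its terms are negative on some interval `(0, δ)`,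
because `C_α(W) → C_0(W) < R`, and for `α ≥ δ` they are at most `δ⁻¹ (log |Y| - R)`, since
`I_α(P;W) ≤ log |Y|` by the power mean inequality.
-/

open Topology

section

variable {X Y : Type*} [Fintype X] [Fintype Y]

lemma IsPMF.nonempty {W : Y → ℝ} (hW : IsPMF W) : Nonempty Y :=
  Finset.univ_nonempty_iff.mp (Finset.nonempty_of_sum_ne_zero (hW.2 ▸ one_ne_zero))

lemma IsPMF.le_one {W : Y → ℝ} (hW : IsPMF W) (y : Y) : W y ≤ 1 :=
  hW.2 ▸ Finset.single_le_sum (fun y _ => hW.1 y) (Finset.mem_univ y)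

lemma isPMF_uniform [Nonempty X] : IsPMF fun _ : X => (Fintype.card X : ℝ)⁻¹ :=
  ⟨fun _ => by positivity, by simp⟩

lemma sum_sum_mul_eq_one {W : X → Y → ℝ} (hW : ∀ x, IsPMF (W x)) {P : X → ℝ} (hP : IsPMF P) :
    ∑ y, ∑ x, P x * W x y = 1 := by
  rw [Finset.sum_comm]
  simp_rw [← Finset.mul_sum, (hW _).2, mul_one, hP.2]

lemma renyiInfo_le_log_card {W : X → Y → ℝ} (hW : ∀ x, IsPMF (W x)) {P : X → ℝ} (hP : IsPMF P)
    {α : ℝ} (hα : α ∈ Set.Ioo (0 : ℝ) 1) : renyiInfo α P W ≤ log (Fintype.card Y) := by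
  obtain ⟨hα0, hα1⟩ := hα
  obtain ⟨x₀⟩ := hP.nonempty
  have : Nonempty Y := (hW x₀).nonempty
  have hn : (0 : ℝ) < Fintype.card Y := by exact_mod_cast Fintype.card_pos
  set S : Y → ℝ := fun y => ∑ x, P x * W x y ^ α
  have hS : ∀ y, 0 ≤ S y := fun y =>
    Finset.sum_nonneg fun x _ => mul_nonneg (hP.1 x) (rpow_nonneg ((hW x).1 y) α)
  have hsumS : 1 ≤ ∑ y, S y := by
    rw [← sum_sum_mul_eq_one hW hP]
    refine Finset.sum_le_sum fun y _ => Finset.sum_le_sum fun x _ => ?_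
    exact mul_le_mul_of_nonneg_left
      (self_le_rpow_of_le_one ((hW x).1 y) ((hW x).le_one y) hα1.le) (hP.1 x)
  have hpowerMean : 1 ≤ (Fintype.card Y : ℝ) ^ (α⁻¹ - 1) * ∑ y, S y ^ α⁻¹ :=
    (one_le_rpow hsumS (inv_nonneg.2 hα0.le)).trans <|
      rpow_sum_le_const_mul_sum_rpow_of_nonneg Finset.univ ((one_le_inv₀ hα0).2 hα1.le)
        fun y _ => hS y
  have hlog : (1 - α⁻¹) * log (Fintype.card Y) ≤ log (∑ y, S y ^ α⁻¹) := by
    have hsum : 0 < ∑ y, S y ^ α⁻¹ := pos_of_mul_pos_right (one_pos.trans_le hpowerMean)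
      (by positivity)
    have := log_le_log one_pos hpowerMean
    rw [log_one, log_mul (by positivity) hsum.ne', log_rpow hn] at this
    linarith
  have hscale : α * ((1 - α⁻¹) * log (Fintype.card Y)) = (α - 1) * log (Fintype.card Y) := by
    field_simp
  rw [renyiInfo, if_neg hα1.ne, div_mul_eq_mul_div, div_le_iff_of_neg (by linarith)]
  linarith [mul_le_mul_of_nonneg_left hlog hα0.le]

lemma renyiCap_le_log_card {W : X → Y → ℝ} (hW : ∀ x, IsPMF (W x)) {α : ℝ}
    (hα : α ∈ Set.Ioo (0 : ℝ) 1) : renyiCap α W ≤ log (Fintype.card Y) :=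
  Real.sSup_le (by rintro _ ⟨P, hP, rfl⟩; exact renyiInfo_le_log_card hW hP hα)
    (log_natCast_nonneg _)

lemma hasDerivAt_const_rpow_of_nonneg {w : ℝ} (hw : 0 ≤ w) {a : ℝ} (ha : 0 < a) :
    HasDerivAt (fun α : ℝ => w ^ α) (w ^ a * log w) a := by
  rcases hw.eq_or_lt with rfl | hw
  · rw [log_zero, mul_zero]
    refine (hasDerivAt_const a (0 : ℝ)).congr_of_eventuallyEq ?_
    filter_upwards [eventually_gt_nhds ha] with α hα using zero_rpow hα.ne'
  · simpa [mul_comm] using (hasDerivAt_id a).const_rpow hw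

lemma hasDerivAt_sum_mul_rpow_rpow_inv {a w : X → ℝ} (ha : ∀ x, 0 ≤ a x) (hw : ∀ x, 0 ≤ w x) :
    HasDerivAt (fun α : ℝ => (∑ x, a x * w x ^ α) ^ α⁻¹)
      (∑ x, a x * (w x * log (w x)) - (∑ x, a x * w x) * log (∑ x, a x * w x)) 1 := by
  set S : ℝ → ℝ := fun α => ∑ x, a x * w x ^ α
  have hS : HasDerivAt S (∑ x, a x * (w x * log (w x))) 1 := by
    simpa using HasDerivAt.fun_sum fun x _ =>
      (hasDerivAt_const_rpow_of_nonneg (hw x) one_pos).const_mul (a x)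
  have hS1 : S 1 = ∑ x, a x * w x := by simp [S]
  rcases (Finset.sum_nonneg fun x _ => mul_nonneg (ha x) (hw x)).eq_or_lt with h0 | hpos
  · have hterm : ∀ x, a x * w x = 0 := fun x =>
      (Finset.sum_eq_zero_iff_of_nonneg fun x _ => mul_nonneg (ha x) (hw x)).1 h0.symm x
        (Finset.mem_univ x)
    have hderiv : ∀ x, a x * (w x * log (w x)) = 0 := fun x => by
      rw [← mul_assoc, hterm, zero_mul]
    simp only [hderiv, ← h0, Finset.sum_const_zero, zero_mul, sub_zero]
    refine (hasDerivAt_const (1 : ℝ) (0 : ℝ)).congr_of_eventuallyEq ?_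
    filter_upwards [eventually_gt_nhds one_pos] with α hα
    have hSα : S α = 0 := Finset.sum_eq_zero fun x _ => by
      rcases mul_eq_zero.1 (hterm x) with h | h <;> simp [h, zero_rpow hα.ne']
    show S α ^ α⁻¹ = 0
    rw [hSα, zero_rpow (inv_ne_zero hα.ne')]
  · refine (hS.rpow (hasDerivAt_inv one_ne_zero) (hS1 ▸ hpos)).congr_deriv ?_
    simp [hS1]
    ring

lemma renyiInfo_one_eq {W : X → Y → ℝ} (hW : ∀ x y, 0 ≤ W x y) {P : X → ℝ} (hP : ∀ x, 0 ≤ P x) :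
    renyiInfo 1 P W = ∑ y, (∑ x, P x * (W x y * log (W x y)) -
      (∑ x, P x * W x y) * log (∑ x, P x * W x y)) := by
  rw [renyiInfo, if_pos rfl]
  simp_rw [Finset.mul_sum]
  rw [Finset.sum_comm]
  refine Finset.sum_congr rfl fun y _ => ?_
  rw [Finset.sum_mul, ← Finset.sum_sub_distrib]
  refine Finset.sum_congr rfl fun x _ => ?_
  rcases eq_or_ne (P x * W x y) 0 with h | h
  · rcases mul_eq_zero.1 h with h | h <;> simp [h]
  · have hQ : 0 < ∑ x, P x * W x y :=
      (lt_of_le_of_ne (mul_nonneg (hP x) (hW x y)) h.symm).trans_le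
        (Finset.single_le_sum (fun x _ => mul_nonneg (hP x) (hW x y)) (Finset.mem_univ x))
    rw [log_div (right_ne_zero_of_mul h) hQ.ne']
    ring

lemma hasDerivAt_log_sum_rpow_inv {W : X → Y → ℝ} (hW : ∀ x, IsPMF (W x)) {P : X → ℝ}
    (hP : IsPMF P) :
    HasDerivAt (fun α : ℝ => log (∑ y, (∑ x, P x * W x y ^ α) ^ α⁻¹)) (renyiInfo 1 P W) 1 := by
  have hsum := HasDerivAt.fun_sum fun y (_ : y ∈ Finset.univ) =>
    hasDerivAt_sum_mul_rpow_rpow_inv hP.1 fun x => (hW x).1 y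
  simpa [sum_sum_mul_eq_one hW hP, renyiInfo_one_eq (fun x => (hW x).1) hP.1] using
    hsum.log (by simp [sum_sum_mul_eq_one hW hP])

lemma tendsto_mul_div_sub_one_of_hasDerivAt {F : ℝ → ℝ} {F' : ℝ} (hF : HasDerivAt F F' 1)
    (hF1 : F 1 = 0) : Tendsto (fun α => α / (α - 1) * F α) (𝓝[≠] 1) (𝓝 F') := by
  have := ((continuous_id.tendsto (1 : ℝ)).mono_left nhdsWithin_le_nhds).mul
    (hasDerivAt_iff_tendsto_slope.1 hF)
  rw [id, one_mul] at this
  refine this.congr fun α => ?_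
  simp [slope_def_field, hF1]
  ring

lemma tendsto_renyiInfo_one {W : X → Y → ℝ} (hW : ∀ x, IsPMF (W x)) {P : X → ℝ} (hP : IsPMF P) :
    Tendsto (fun α => renyiInfo α P W) (𝓝[≠] 1) (𝓝 (renyiInfo 1 P W)) := by
  refine (tendsto_mul_div_sub_one_of_hasDerivAt (hasDerivAt_log_sum_rpow_inv hW hP) ?_).congr' ?_
  · simpa using congrArg log (sum_sum_mul_eq_one hW hP)
  · filter_upwards [self_mem_nhdsWithin] with α hα
    rw [renyiInfo, if_neg (show α ≠ 1 from hα)]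

lemma exists_lt_renyiCap [Nonempty X] {W : X → Y → ℝ} (hW : ∀ x, IsPMF (W x)) {R : ℝ}
    (hR : R < renyiCap 1 W) : ∃ α ∈ Set.Ioo (0 : ℝ) 1, R < renyiCap α W := by
  obtain ⟨_, ⟨P, hP, rfl⟩, hRP⟩ := exists_lt_of_lt_csSup (by exact ⟨_, _, isPMF_uniform, rfl⟩) hR
  have hnear : ∀ᶠ α in 𝓝[<] 1, R < renyiInfo α P W :=
    ((tendsto_renyiInfo_one hW hP).mono_left (nhdsWithin_mono _ fun _ h => ne_of_lt h)).eventually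
      (eventually_gt_nhds hRP)
  obtain ⟨α, hRα, hα⟩ := (hnear.and (Ioo_mem_nhdsLT zero_lt_one)).exists
  have hbdd : BddAbove {c | ∃ P : X → ℝ, IsPMF P ∧ c = renyiInfo α P W} :=
    ⟨_, by rintro _ ⟨Q, hQ, rfl⟩; exact renyiInfo_le_log_card hW hQ hα⟩
  exact ⟨α, hα, hRα.trans_le (le_csSup hbdd ⟨P, hP, rfl⟩)⟩

lemma le_spe {W : X → Y → ℝ} (hW : ∀ x, IsPMF (W x)) {R : ℝ}
    (h0 : ∀ᶠ β in 𝓝[>] 0, renyiCap β W < R) {α : ℝ} (hα : α ∈ Set.Ioo (0 : ℝ) 1) :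
    (1 - α) / α * (renyiCap α W - R) ≤ spe R W := by
  obtain ⟨δ, hδ, hδR⟩ := mem_nhdsGT_iff_exists_Ioo_subset.1 h0
  refine le_csSup ⟨max 0 (δ⁻¹ * (log (Fintype.card Y) - R)), ?_⟩ ⟨α, hα, rfl⟩
  rintro _ ⟨β, ⟨hβ0, hβ1⟩, rfl⟩
  rcases le_or_gt (renyiCap β W) R with hle | hlt
  · exact (mul_nonpos_of_nonneg_of_nonpos (div_nonneg (by linarith) hβ0.le) (by linarith)).trans
      (le_max_left _ _)
  · have hδβ : δ ≤ β := not_lt.1 fun h => (hδR ⟨hβ0, h⟩ : renyiCap β W < R).not_gt hlt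
    have hcoef : (1 - β) / β ≤ δ⁻¹ :=
      calc (1 - β) / β ≤ 1 / β := by gcongr; linarith
        _ ≤ δ⁻¹ := by rw [one_div]; exact inv_anti₀ hδ hδβ
    exact le_max_of_le_right (mul_le_mul hcoef
      (by linarith [renyiCap_le_log_card hW ⟨hβ0, hβ1⟩]) (by linarith) (inv_nonneg.2 hδ.le))

end

theorem spe_pos_general {X Y : Type*} [Fintype X] [Fintype Y] [Nonempty X]
    (W : X → Y → ℝ) (hW : ∀ x, IsPMF (W x)) (C0 : ℝ)
    (hC0 : Filter.Tendsto (fun α => renyiCap α W) (nhdsWithin 0 (Set.Ioi 0)) (nhds C0))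
    (R : ℝ) (hR : R ∈ Set.Ioo C0 (renyiCap 1 W)) :
    0 < spe R W := by
  obtain ⟨α, hα, hRα⟩ := exists_lt_renyiCap hW hR.2
  calc 0 < (1 - α) / α * (renyiCap α W - R) :=
        mul_pos (div_pos (sub_pos.2 hα.2) hα.1) (sub_pos.2 hRα)
    _ ≤ spe R W := le_spe hW (hC0.eventually (eventually_lt_nhds hR.1)) hα

/-- the sphere packing exponent is strictly positive on `(C_0(W), C_1(W))`. -/
theorem spe_pos {X Y : Type*} [Fintype X] [Fintype Y] [Nonempty X]
    (W : X → Y → ℝ) (hW : ∀ x, IsPMF (W x)) (C0 : ℝ)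
    (hC0 : Filter.Tendsto (fun α => renyiCap α W) (nhdsWithin 0 (Set.Ioi 0)) (nhds C0))
    (hne : C0 ≠ renyiCap 1 W) (R : ℝ) (hR : R ∈ Set.Ioo C0 (renyiCap 1 W)) :
    0 < spe R W :=
  spe_pos_general W hW C0 hC0 R hR
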